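/- If (X,Y) is a minimally-sided homogeneous cut of a trigraph T, then the block of decomposition T_X has no homogeneous cut. -/

import Mathlib

structure Trigraph (V : Type*) where
  θ : V → V → ℤ
  symm : ∀ u v, θ u v = θ v u
  range : ∀ u v, u ≠ v → θ u v = -1 ∨ θ u v = 0 ∨ θ u v = 1

namespace Trigraph

variable {V : Type*}

/-- `u` and `v` form a strong edge. -/
def SEdge (T : Trigraph V) (u v : V) : Prop := u ≠ v ∧ T.θ u v = 1

/-- `u` and `v` form a strong antiedge. -/
def SAnti (T : Trigraph V) (u v : V) : Prop := u ≠ v ∧ T.θ u v = -1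

/-- `u` and `v` form a switchable pair. -/
def Switch (T : Trigraph V) (u v : V) : Prop := u ≠ v ∧ T.θ u v = 0

/-- `u` and `v` are adjacent. -/
def Adj (T : Trigraph V) (u v : V) : Prop := u ≠ v ∧ (T.θ u v = 0 ∨ T.θ u v = 1)

/-- `u` and `v` are antiadjacent. -/
def Anti (T : Trigraph V) (u v : V) : Prop := u ≠ v ∧ (T.θ u v = -1 ∨ T.θ u v = 0)

instance [DecidableEq V] (T : Trigraph V) (u v : V) : Decidable (T.Adj u v) :=
  inferInstanceAs (Decidable (u ≠ v ∧ (T.θ u v = 0 ∨ T.θ u v = 1)))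

instance [DecidableEq V] (T : Trigraph V) (u v : V) : Decidable (T.Anti u v) :=
  inferInstanceAs (Decidable (u ≠ v ∧ (T.θ u v = -1 ∨ T.θ u v = 0)))

instance [DecidableEq V] (T : Trigraph V) (u v : V) : Decidable (T.Switch u v) :=
  inferInstanceAs (Decidable (u ≠ v ∧ T.θ u v = 0))

instance [DecidableEq V] (T : Trigraph V) (u v : V) : Decidable (T.SAnti u v) :=
  inferInstanceAs (Decidable (u ≠ v ∧ T.θ u v = -1))

/-- A trigraph is monogamous if every vertex is in at most one switchable pair. -/
def Monogamous (T : Trigraph V) : Prop :=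
  ∀ v u w : V, T.Switch v u → T.Switch v w → u = w

/-- The complement trigraph. -/
def compl (T : Trigraph V) : Trigraph V where
  θ := fun u v => -(T.θ u v)
  symm := fun u v => congrArg Neg.neg (T.symm u v)
  range := fun u v h => by
    have := T.range u v h
    try dsimp only
    omega

def IsBull (T : Trigraph V) (x1 x2 x3 y z : V) : Prop :=
  T.Adj x1 x2 ∧ T.Adj x1 x3 ∧ T.Adj x2 x3 ∧
  T.Adj y x1 ∧ T.Anti y x2 ∧ T.Anti y x3 ∧ T.Anti y z ∧
  T.Adj z x2 ∧ T.Anti z x1 ∧ T.Anti z x3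

def BullFree (T : Trigraph V) : Prop := ∀ x1 x2 x3 y z : V, ¬ T.IsBull x1 x2 x3 y z

/-- `S` is strongly complete to `A`. -/
def SComplete (T : Trigraph V) (S A : Set V) : Prop := ∀ s ∈ S, ∀ a ∈ A, T.SEdge s a

/-- `S` is strongly anticomplete to `A`. -/
def SAnticomplete (T : Trigraph V) (S A : Set V) : Prop := ∀ s ∈ S, ∀ a ∈ A, T.SAnti s a

/-- A homogeneous set. -/
def HomSet (T : Trigraph V) (X : Set V) : Prop :=
  1 < X.ncard ∧ X.ncard < Nat.card V ∧
  ∀ v ∉ X, (∀ a ∈ X, T.SEdge v a) ∨ (∀ a ∈ X, T.SAnti v a)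

/-- `(A,B,C,D,E,F)` is a split of the homogeneous pair `(A,B)`. -/
def IsSplit (T : Trigraph V) (A B C D E F : Set V) : Prop :=
  A.Nonempty ∧ B.Nonempty ∧ Disjoint A B ∧
  Disjoint C D ∧ Disjoint C E ∧ Disjoint C F ∧
  Disjoint D E ∧ Disjoint D F ∧ Disjoint E F ∧
  C ∪ D ∪ E ∪ F = (A ∪ B)ᶜ ∧
  T.SComplete A (C ∪ E) ∧ T.SAnticomplete A (D ∪ F) ∧
  T.SComplete B (D ∪ E) ∧ T.SAnticomplete B (C ∪ F) ∧
  ¬ T.SComplete A B ∧ ¬ T.SAnticomplete A B ∧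
  3 ≤ (A ∪ B).ncard ∧ 3 ≤ (C ∪ D ∪ E ∪ F).ncard

/-- `(A,B)` is a homogeneous pair. -/
def HomPair (T : Trigraph V) (A B : Set V) : Prop := ∃ C D E F, T.IsSplit A B C D E F

/-- A small homogeneous pair. -/
def SmallHomPair (T : Trigraph V) (A B : Set V) : Prop :=
  T.HomPair A B ∧ (A ∪ B).ncard ≤ 6

/-- A proper homogeneous pair. -/
def ProperHomPair (T : Trigraph V) (A B : Set V) : Prop :=
  ∃ C D E F, T.IsSplit A B C D E F ∧ C.Nonempty ∧ D.Nonempty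

/-- `(X, Xᶜ)` is a decomposition of `T`. -/
def Decomp (T : Trigraph V) (X : Set V) : Prop :=
  T.HomSet X ∨ ∃ A B, X = A ∪ B ∧ (T.SmallHomPair A B ∨ T.ProperHomPair A B)

/-- `(X, Xᶜ)` is a homogeneous cut of `T`. -/
def HomCut (T : Trigraph V) (X : Set V) : Prop :=
  T.HomSet X ∨ ∃ A B, X = A ∪ B ∧ T.ProperHomPair A B

/-- A minimally-sided homogeneous cut. -/
def MinSidedHomCut (T : Trigraph V) (X : Set V) : Prop :=
  T.HomCut X ∧ ∀ X' : Set V, T.HomCut X' → ¬ X' ⊂ X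

/-- The induced subtrigraph on `X`. -/
def induce (T : Trigraph V) (X : Set V) : Trigraph X where
  θ := fun u v => T.θ u v
  symm := fun u v => T.symm u v
  range := fun u v h => T.range u v (fun hh => h (Subtype.ext hh))

open Classical in
/-- The trigraph obtained from `T[X]` by adding two marker vertices joined by a switchable
pair, the first strongly complete to (the trace in `X` of) `P` and strongly anticomplete to
the rest of `X`, the second strongly complete to `Q` and strongly anticomplete to the rest. -/
noncomputable def augment2 (T : Trigraph V) (X P Q : Set V) : Trigraph (↥X ⊕ Fin 2) where
  θ := fun u v =>
    match u, v with
    | Sum.inl u, Sum.inl v => T.θ u v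
    | Sum.inl u, Sum.inr i => if (i = 0 ∧ (u : V) ∈ P) ∨ (i = 1 ∧ (u : V) ∈ Q) then 1 else -1
    | Sum.inr i, Sum.inl u => if (i = 0 ∧ (u : V) ∈ P) ∨ (i = 1 ∧ (u : V) ∈ Q) then 1 else -1
    | Sum.inr _, Sum.inr _ => 0
  symm := by
    rintro (u | i) (v | j)
    · exact T.symm u v
    · rfl
    · rfl
    · rfl
  range := by
    rintro (u | i) (v | j) h
    · exact T.range u v fun hh => h (by rw [Subtype.ext hh])
    · dsimp only; split <;> simp
    · dsimp only; split <;> simp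
    · simp

/-- The block of decomposition `T_X` for a proper homogeneous pair `(A,B)`:
`T[A ∪ B]` together with marker vertices `c` (strongly complete to `A`) and `d`
(strongly complete to `B`), with `cd` a switchable pair. -/
noncomputable def blockXPair (T : Trigraph V) (A B : Set V) : Trigraph (↥(A ∪ B) ⊕ Fin 2) :=
  T.augment2 (A ∪ B) A B

/-- The block of decomposition `T_Y` for a homogeneous pair `(A,B)` with split
`(A,B,C,D,E,F)` : `T[Y]` (where `Y = (A ∪ B)ᶜ`) together with marker vertices `a`
(strongly complete to `C ∪ E`) and `b` (strongly complete to `D ∪ E`), with `ab` a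
switchable pair. -/
noncomputable def blockYPair (T : Trigraph V) (A B C D E : Set V) : Trigraph (↥(A ∪ B)ᶜ ⊕ Fin 2) :=
  T.augment2 (A ∪ B)ᶜ (C ∪ E) (D ∪ E)

/-- A strong clique: vertices pairwise strongly adjacent. -/
def StrongClique (T : Trigraph V) (K : Set V) : Prop := K.Pairwise T.SEdge

/-- A strong stable set: vertices pairwise strongly antiadjacent. -/
def StrongStable (T : Trigraph V) (K : Set V) : Prop := K.Pairwise T.SAnti

/-- `T[X]` is triangle-free. -/
def TriangleFreeOn (T : Trigraph V) (X : Set V) : Prop :=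
  ∀ x ∈ X, ∀ y ∈ X, ∀ z ∈ X, ¬ (T.Adj x y ∧ T.Adj x z ∧ T.Adj y z)

/-- Membership in the basic class `𝒯₁`. -/
def InT1 (T : Trigraph V) : Prop :=
  T.Monogamous ∧ ∃ (X : Set V) (t : ℕ) (K : Fin t → Set V),
    (X ∪ ⋃ i, K i) = Set.univ ∧
    (∀ i, Disjoint X (K i)) ∧ (∀ i j, i ≠ j → Disjoint (K i) (K j)) ∧
    T.TriangleFreeOn X ∧ (∀ i, T.StrongClique (K i)) ∧
    (∀ i j, i ≠ j → T.SAnticomplete (K i) (K j)) ∧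
    (∀ i, ∀ v ∈ K i, ∃ A B : Set V,
      A ∪ B = {x ∈ X | T.Adj v x} ∧ Disjoint A B ∧
      T.StrongStable A ∧ T.StrongStable B ∧ T.SComplete A B)

/-- Membership in the basic class `𝒯₀`: monogamous trigraphs on at most 8 vertices. -/
def InT0 (T : Trigraph V) : Prop := T.Monogamous ∧ Nat.card V ≤ 8

/-- A basic trigraph: a member of `𝒯₀ ∪ 𝒯₁ ∪ 𝒯₁bar`. -/
def Basic (T : Trigraph V) : Prop := T.InT0 ∨ T.InT1 ∨ T.compl.InT1

/-- `h` lists the vertices of a hole of length `k` in `T`. -/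
def IsHole (T : Trigraph V) (k : ℕ) (h : Fin k → V) : Prop :=
  4 ≤ k ∧ Function.Injective h ∧ ∀ i j : Fin k,
    (((i.val + 1) % k = j.val ∨ (j.val + 1) % k = i.val) → T.Adj (h i) (h j)) ∧
    (i ≠ j → ¬ ((i.val + 1) % k = j.val ∨ (j.val + 1) % k = i.val) → T.Anti (h i) (h j))

def HasOddHole (T : Trigraph V) : Prop := ∃ k, Odd k ∧ ∃ h : Fin k → V, T.IsHole k h

/-- A Berge trigraph: no odd hole and no odd antihole. -/
def Berge (T : Trigraph V) : Prop := ¬ T.HasOddHole ∧ ¬ T.compl.HasOddHole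

/-- `(wv, we)` are legitimate weights for the trigraph `T`: `we` is symmetric and for every
switchable pair `uv` we have `max (wv u) (wv v) ≤ we u v ≤ wv u + wv v`. -/
def GoodWeights (T : Trigraph V) (wv : V → ℕ) (we : V → V → ℕ) : Prop :=
  (∀ u v, we u v = we v u) ∧
  ∀ u v, T.Switch u v → max (wv u) (wv v) ≤ we u v ∧ we u v ≤ wv u + wv v

/-- `S` is a stable set of `T`. -/
def StableF (T : Trigraph V) (S : Finset V) : Prop :=
  ∀ u ∈ S, ∀ v ∈ S, u ≠ v → T.Anti u v

open Classical in
/-- The weight of a stable set `S`: the sum of the weights of the vertices of `S` that are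
strongly antiadjacent to every other vertex of `S`, plus the sum of the weights of the
switchable pairs with both ends in `S`. -/
noncomputable def weightF (T : Trigraph V) (wv : V → ℕ) (we : V → V → ℕ) (S : Finset V) : ℕ :=
  (∑ v ∈ S.filter (fun v => ∀ u ∈ S, u ≠ v → T.SAnti u v), wv v)
    + (∑ u ∈ S, ∑ v ∈ S, if T.Switch u v then we u v else 0) / 2

open Classical in
/-- The maximum weight of a stable set of `T` contained in `X`. -/
noncomputable def alphaOn [Fintype V] (T : Trigraph V) (wv : V → ℕ) (we : V → V → ℕ)
    (X : Set V) : ℕ :=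
  (Finset.univ.powerset.filter fun S : Finset V => ↑S ⊆ X ∧ T.StableF S).sup (T.weightF wv we)

/-- The maximum weight of a stable set of `T`. -/
noncomputable def alphaW [Fintype V] (T : Trigraph V) (wv : V → ℕ) (we : V → V → ℕ) : ℕ :=
  T.alphaOn wv we Set.univ

open Classical in
/-- The trigraph `T_{a → S}` obtained from `T` by turning the switchable pair `ab` into a
strong edge and adding a new vertex `a' = none` strongly complete to `N(a) ∖ {b}` and
strongly anticomplete to everything else (including `a`). -/
noncomputable def expandS (T : Trigraph V) (a b : V) : Trigraph (Option V) where
  θ := fun u v =>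
    match u, v with
    | some u, some v => if (u = a ∧ v = b) ∨ (u = b ∧ v = a) then 1 else T.θ u v
    | some u, none => if T.Adj a u ∧ u ≠ b then 1 else -1
    | none, some v => if T.Adj a v ∧ v ≠ b then 1 else -1
    | none, none => -1
  symm := by
    rintro (_ | u) (_ | v)
    · rfl
    · rfl
    · rfl
    · dsimp only
      have hiff : ((u = a ∧ v = b) ∨ (u = b ∧ v = a)) ↔ ((v = a ∧ u = b) ∨ (v = b ∧ u = a)) := by
        tauto
      rw [if_congr hiff rfl (T.symm u v)]
  range := by
    rintro (_ | u) (_ | v) h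
    · exact absurd rfl h
    · dsimp only; split <;> simp
    · dsimp only; split <;> simp
    · dsimp only
      split
      · simp
      · exact T.range u v fun hh => h (by rw [hh])

open Classical in
/-- The trigraph `T_{a → K}`, defined like `T_{a → S}` except that the new vertex `a'` is in
addition strongly adjacent to `a`. -/
noncomputable def expandK (T : Trigraph V) (a b : V) : Trigraph (Option V) where
  θ := fun u v =>
    match u, v with
    | some u, some v => if (u = a ∧ v = b) ∨ (u = b ∧ v = a) then 1 else T.θ u v
    | some u, none => if (T.Adj a u ∧ u ≠ b) ∨ u = a then 1 else -1
    | none, some v => if (T.Adj a v ∧ v ≠ b) ∨ v = a then 1 else -1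
    | none, none => -1
  symm := by
    rintro (_ | u) (_ | v)
    · rfl
    · rfl
    · rfl
    · dsimp only
      have hiff : ((u = a ∧ v = b) ∨ (u = b ∧ v = a)) ↔ ((v = a ∧ u = b) ∨ (v = b ∧ u = a)) := by
        tauto
      rw [if_congr hiff rfl (T.symm u v)]
  range := by
    rintro (_ | u) (_ | v) h
    · exact absurd rfl h
    · dsimp only; split <;> simp
    · dsimp only; split <;> simp
    · dsimp only
      split
      · simp
      · exact T.range u v fun hh => h (by rw [hh])

/-- Vertex weights for `T_{a → S}`. -/
def wvS (wv : V → ℕ) (we : V → V → ℕ) (a b : V) [DecidableEq V] : Option V → ℕ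
  | some v => if v = a then wv a + wv b - we a b else wv v
  | none => we a b - wv b

/-- Vertex weights for `T_{a → K}`. -/
def wvK (wv : V → ℕ) (we : V → V → ℕ) (a b : V) : Option V → ℕ
  | some v => wv v
  | none => we a b - wv b

/-- Switchable-pair weights for `T_{a → S}` and `T_{a → K}`. -/
def weO (we : V → V → ℕ) : Option V → Option V → ℕ
  | some u, some v => we u v
  | _, _ => 0

end Trigraph

/-!
A homogeneous cut of the block `T_X` yields a homogeneous cut of `T` strictly inside `X`,
contradicting minimality.

If `X` is a homogeneous set, `T[X]` sits inside `T` and every vertex outside `X` is strongly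
complete or strongly anticomplete to all of `X`, so homogeneous sets and pairs of `T[X]` remain
homogeneous in `T`.

If `X = A ∪ B` for a proper homogeneous pair with split `(A, B, C, D, E, F)`, the markers `c, d`
of `T_X` see `A ∪ B` exactly as a vertex `c₀ ∈ C` and a vertex `d₀ ∈ D` do. A homogeneous cut of
`T_X` avoiding the markers therefore lifts to `T`: the marker `c` being strongly complete or
anticomplete to each of its sides, each side lies in `A` or in `B`, so vertices outside `A ∪ B`
are strong to it. Since `cd` is switchable, a homogeneous cut containing one marker contains the
other. As no vertex of `A ∪ B` is strong to `{c, d}`, such a cut is not a homogeneous set, and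
it is a homogeneous pair `(A', B')` with `c` and `d` on different sides. Then the vertices of
`A ∪ B` outside `A' ∪ B'` form sets `R ⊆ A`, `S ⊆ B` such that every other vertex of `T` is
strong to `R` and to `S`; so `R` or `S` is a homogeneous set, or `(R, S)` is a proper
homogeneous pair of `T`.
-/

namespace Trigraph

open Set Function

variable {V W : Type*} {T : Trigraph V}

def StrongTo (T : Trigraph V) (v : V) (S : Set V) : Prop :=
  (∀ a ∈ S, T.SEdge v a) ∨ ∀ a ∈ S, T.SAnti v a

def PairModule (T : Trigraph V) (A B : Set V) : Prop :=
  ∀ v ∉ A ∪ B, T.StrongTo v A ∧ T.StrongTo v B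

/-- The vertices that may form the part `C` of a split of `(A, B)`; those that may form `D` are
the C-vertices of `(B, A)`. -/
def IsCVertex (T : Trigraph V) (A B : Set V) (v : V) : Prop :=
  (∀ a ∈ A, T.SEdge v a) ∧ ∀ b ∈ B, T.SAnti v b

theorem SEdge.symm {u v : V} (h : T.SEdge u v) : T.SEdge v u :=
  ⟨h.1.symm, (T.symm v u).trans h.2⟩

theorem SAnti.symm {u v : V} (h : T.SAnti u v) : T.SAnti v u :=
  ⟨h.1.symm, (T.symm v u).trans h.2⟩

theorem Switch.symm {u v : V} (h : T.Switch u v) : T.Switch v u :=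
  ⟨h.1.symm, (T.symm v u).trans h.2⟩

theorem SEdge.not_sAnti {u v : V} (h : T.SEdge u v) : ¬ T.SAnti u v := fun h' => by
  have := h.2.symm.trans h'.2
  omega

theorem nonempty_of_not_sComplete {A B : Set V} (h : ¬ T.SComplete A B) :
    A.Nonempty ∧ B.Nonempty := by
  simp only [SComplete, not_forall] at h
  obtain ⟨a, ha, b, hb, -⟩ := h
  exact ⟨⟨a, ha⟩, ⟨b, hb⟩⟩

namespace StrongTo

variable {v : V} {S S' : Set V}

theorem mono (h : T.StrongTo v S') (hS : S ⊆ S') : T.StrongTo v S :=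
  h.imp (fun h a ha => h a (hS ha)) fun h a ha => h a (hS ha)

theorem not_mem (h : T.StrongTo v S) : v ∉ S := fun hv =>
  h.elim (fun h => (h v hv).1 rfl) fun h => (h v hv).1 rfl

theorem θ_eq (h : T.StrongTo v S) {a b : V} (ha : a ∈ S) (hb : b ∈ S) :
    T.θ v a = T.θ v b := by
  rcases h with h | h
  · rw [(h a ha).2, (h b hb).2]
  · rw [(h a ha).2, (h b hb).2]

theorem congr {v' : V} (h : T.StrongTo v' S) (hv : v ∉ S) (hθ : ∀ s ∈ S, T.θ v s = T.θ v' s) :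
    T.StrongTo v S := by
  have hne : ∀ s ∈ S, v ≠ s := fun s hs hvs => hv (hvs ▸ hs)
  rcases h with h | h
  · exact Or.inl fun s hs => ⟨hne s hs, (hθ s hs).trans (h s hs).2⟩
  · exact Or.inr fun s hs => ⟨hne s hs, (hθ s hs).trans (h s hs).2⟩

end StrongTo

theorem Switch.not_strongTo {u v : V} {S : Set V} (h : T.Switch u v) (hv : v ∈ S) :
    ¬ T.StrongTo u S := by
  rintro (h' | h')
  · exact absurd (h' v hv).2 (by rw [h.2]; decide)
  · exact absurd (h' v hv).2 (by rw [h.2]; decide)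

theorem Switch.mem_of_strongTo {u v : V} {S S' : Set V} (h : T.Switch v u)
    (hS : ∀ w ∉ S, T.StrongTo w S') (hu : u ∈ S') : v ∈ S :=
  by_contra fun hv => h.not_strongTo hu (hS v hv)

theorem Switch.mem_union_of_pairModule {u v : V} {A B : Set V} (h : T.Switch v u)
    (hmod : T.PairModule A B) (hu : u ∈ A ∪ B) : v ∈ A ∪ B := by
  rcases hu with hu | hu
  exacts [h.mem_of_strongTo (fun w hw => (hmod w hw).1) hu,
    h.mem_of_strongTo (fun w hw => (hmod w hw).2) hu]

namespace IsCVertex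

variable {A B : Set V} {c : V}

theorem disjoint (h : T.IsCVertex A B c) : Disjoint A B :=
  disjoint_left.2 fun a ha hb => (h.1 a ha).not_sAnti (h.2 a hb)

theorem not_mem (h : T.IsCVertex A B c) : c ∉ A ∪ B := by
  rintro (h' | h')
  exacts [(h.1 c h').1 rfl, (h.2 c h').1 rfl]

theorem mono {A' B' : Set V} (h : T.IsCVertex A B c) (hA : A' ⊆ A) (hB : B' ⊆ B) :
    T.IsCVertex A' B' c :=
  ⟨fun a ha => h.1 a (hA ha), fun b hb => h.2 b (hB hb)⟩

theorem strongTo {S : Set V} (h : T.IsCVertex A B c) (hS : S ⊆ A ∨ S ⊆ B) : T.StrongTo c S :=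
  hS.imp (fun hS a ha => h.1 a (hS ha)) fun hS b hb => h.2 b (hS hb)

theorem subset_or_subset {S : Set V} (h : T.IsCVertex A B c) (hS : S ⊆ A ∪ B)
    (hc : T.StrongTo c S) : S ⊆ A ∨ S ⊆ B := by
  rcases hc with hc | hc
  · refine Or.inl fun s hs => (hS hs).resolve_right fun hB => (hc s hs).not_sAnti (h.2 s hB)
  · refine Or.inr fun s hs => (hS hs).resolve_left fun hA => (h.1 s hA).not_sAnti (hc s hs)

end IsCVertex

theorem PairModule.strongTo {A B S : Set V} {v : V} (h : T.PairModule A B) (hv : v ∉ A ∪ B)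
    (hS : S ⊆ A ∨ S ⊆ B) : T.StrongTo v S :=
  hS.elim (fun hS => (h v hv).1.mono hS) fun hS => (h v hv).2.mono hS

theorem IsSplit.pairModule {A B C D E F : Set V} (h : T.IsSplit A B C D E F) :
    T.PairModule A B := by
  obtain ⟨-, -, -, -, -, -, -, -, -, hU, hAc, hAa, hBc, hBa, -⟩ := h
  intro v hv
  rcases (hU.symm ▸ hv : v ∈ C ∪ D ∪ E ∪ F) with ((hv | hv) | hv) | hv
  · exact ⟨.inl fun a ha => (hAc a ha v (.inl hv)).symm,
      .inr fun b hb => (hBa b hb v (.inl hv)).symm⟩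
  · exact ⟨.inr fun a ha => (hAa a ha v (.inl hv)).symm,
      .inl fun b hb => (hBc b hb v (.inl hv)).symm⟩
  · exact ⟨.inl fun a ha => (hAc a ha v (.inr hv)).symm,
      .inl fun b hb => (hBc b hb v (.inr hv)).symm⟩
  · exact ⟨.inr fun a ha => (hAa a ha v (.inr hv)).symm,
      .inr fun b hb => (hBa b hb v (.inr hv)).symm⟩

theorem isSplit_of_pairModule {A B : Set V} {c : V} (hnc : ¬ T.SComplete A B)
    (hna : ¬ T.SAnticomplete A B) (h3 : 3 ≤ (A ∪ B).ncard) (h3c : 3 ≤ (A ∪ B)ᶜ.ncard)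
    (hmod : T.PairModule A B) (hc : T.IsCVertex A B c) :
    T.IsSplit A B {v | T.IsCVertex A B v} {v | T.IsCVertex B A v}
      {v | (∀ x ∈ A, T.SEdge v x) ∧ ∀ x ∈ B, T.SEdge v x}
      {v | (∀ x ∈ A, T.SAnti v x) ∧ ∀ x ∈ B, T.SAnti v x} := by
  obtain ⟨⟨a, ha⟩, ⟨b, hb⟩⟩ := nonempty_of_not_sComplete hnc
  have hU : {v | T.IsCVertex A B v} ∪ {v | T.IsCVertex B A v} ∪
      {v | (∀ x ∈ A, T.SEdge v x) ∧ ∀ x ∈ B, T.SEdge v x} ∪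
      {v | (∀ x ∈ A, T.SAnti v x) ∧ ∀ x ∈ B, T.SAnti v x} = (A ∪ B)ᶜ := by
    ext v
    simp only [mem_union, mem_ofPred_eq, mem_compl_iff, IsCVertex]
    constructor
    · intro hv
      have hAB : T.StrongTo v A ∧ T.StrongTo v B := by tauto
      rw [not_or]
      exact ⟨hAB.1.not_mem, hAB.2.not_mem⟩
    · intro hv
      rcases hmod v hv with ⟨hA | hA, hB | hB⟩ <;> tauto
  refine ⟨⟨a, ha⟩, ⟨b, hb⟩, hc.disjoint, ?_, ?_, ?_, ?_, ?_, ?_, hU, ?_, ?_, ?_, ?_,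
    hnc, hna, h3, hU ▸ h3c⟩
  · exact disjoint_left.2 fun v h₁ h₂ => (h₁.1 a ha).not_sAnti (h₂.2 a ha)
  · exact disjoint_left.2 fun v h₁ h₂ => (h₂.2 b hb).not_sAnti (h₁.2 b hb)
  · exact disjoint_left.2 fun v h₁ h₂ => (h₁.1 a ha).not_sAnti (h₂.1 a ha)
  · exact disjoint_left.2 fun v h₁ h₂ => (h₂.1 a ha).not_sAnti (h₁.2 a ha)
  · exact disjoint_left.2 fun v h₁ h₂ => (h₁.1 b hb).not_sAnti (h₂.2 b hb)
  · exact disjoint_left.2 fun v h₁ h₂ => (h₁.1 a ha).not_sAnti (h₂.1 a ha)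
  · rintro x hx v (hv | hv)
    exacts [(hv.1 x hx).symm, (hv.1 x hx).symm]
  · rintro x hx v (hv | hv)
    exacts [(hv.2 x hx).symm, (hv.1 x hx).symm]
  · rintro x hx v (hv | hv)
    exacts [(hv.1 x hx).symm, (hv.2 x hx).symm]
  · rintro x hx v (hv | hv)
    exacts [(hv.2 x hx).symm, (hv.2 x hx).symm]

theorem properHomPair_iff {A B : Set V} :
    T.ProperHomPair A B ↔ ¬ T.SComplete A B ∧ ¬ T.SAnticomplete A B ∧ 3 ≤ (A ∪ B).ncard ∧
      3 ≤ (A ∪ B)ᶜ.ncard ∧ T.PairModule A B ∧ (∃ c, T.IsCVertex A B c) ∧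
      ∃ d, T.IsCVertex B A d := by
  constructor
  · rintro ⟨C, D, E, F, hs, ⟨c, hc⟩, ⟨d, hd⟩⟩
    have hmod := hs.pairModule
    obtain ⟨-, -, -, -, -, -, -, -, -, hU, hAc, hAa, hBc, hBa, hnc, hna, h3, h3c⟩ := hs
    exact ⟨hnc, hna, h3, hU ▸ h3c, hmod,
      ⟨c, fun a ha => (hAc a ha c (.inl hc)).symm, fun b hb => (hBa b hb c (.inl hc)).symm⟩,
      ⟨d, fun b hb => (hBc b hb d (.inl hd)).symm, fun a ha => (hAa a ha d (.inl hd)).symm⟩⟩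
  · rintro ⟨hnc, hna, h3, h3c, hmod, ⟨c, hc⟩, ⟨d, hd⟩⟩
    exact ⟨_, _, _, _, isSplit_of_pairModule hnc hna h3 h3c hmod hc, ⟨c, hc⟩, ⟨d, hd⟩⟩

theorem homSet_of_strongTo [Finite V] {Y : Set V} (h1 : 1 < Y.ncard) (hY : Yᶜ.Nonempty)
    (h : ∀ v ∉ Y, T.StrongTo v Y) : T.HomSet Y := by
  refine ⟨h1, ?_, h⟩
  rw [← ncard_univ]
  exact ncard_lt_ncard (ssubset_univ_iff.2 fun hu => by simp [hu] at hY)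

theorem exists_homCut_subset_of_pairModule [Finite V] {R S : Set V} (hmod : T.PairModule R S)
    (h3 : 3 ≤ (R ∪ S).ncard) (h3c : 3 ≤ (R ∪ S)ᶜ.ncard) {c d : V} (hc : T.IsCVertex R S c)
    (hd : T.IsCVertex S R d) : ∃ Y ⊆ R ∪ S, T.HomCut Y := by
  have hne : (R ∪ S)ᶜ.Nonempty := nonempty_of_ncard_ne_zero (by omega)
  by_cases hRS : T.SComplete R S ∨ T.SAnticomplete R S
  · have hR : ∀ v ∉ R, T.StrongTo v R := fun v hv => by
      by_cases hvS : v ∈ S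
      · exact hRS.imp (fun h r hr => (h r hr v hvS).symm) fun h r hr => (h r hr v hvS).symm
      · exact (hmod v (by simp [hv, hvS])).1
    have hS : ∀ v ∉ S, T.StrongTo v S := fun v hv => by
      by_cases hvR : v ∈ R
      · exact hRS.imp (fun h s hs => h v hvR s hs) fun h s hs => h v hvR s hs
      · exact (hmod v (by simp [hv, hvR])).2
    rcases le_or_gt 2 R.ncard with h2 | h2
    · exact ⟨R, subset_union_left,
        .inl (homSet_of_strongTo h2 (hne.mono (compl_subset_compl.2 subset_union_left)) hR)⟩
    · have := ncard_union_le R S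
      exact ⟨S, subset_union_right, .inl (homSet_of_strongTo (by omega)
        (hne.mono (compl_subset_compl.2 subset_union_right)) hS)⟩
  · rw [not_or] at hRS
    exact ⟨R ∪ S, subset_rfl,
      .inr ⟨R, S, rfl, properHomPair_iff.2 ⟨hRS.1, hRS.2, h3, h3c, hmod, ⟨c, hc⟩, d, hd⟩⟩⟩

section Image

variable {T' : Trigraph W} {f : W → V}

theorem sEdge_map_iff (hf : Injective f) {w x : W} (h : T.θ (f w) (f x) = T'.θ w x) :
    T.SEdge (f w) (f x) ↔ T'.SEdge w x := by
  rw [SEdge, SEdge, hf.ne_iff, h]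

theorem sAnti_map_iff (hf : Injective f) {w x : W} (h : T.θ (f w) (f x) = T'.θ w x) :
    T.SAnti (f w) (f x) ↔ T'.SAnti w x := by
  rw [SAnti, SAnti, hf.ne_iff, h]

theorem StrongTo.image (hf : Injective f) {w : W} {S : Set W}
    (hθ : ∀ x ∈ S, T.θ (f w) (f x) = T'.θ w x) (h : T'.StrongTo w S) :
    T.StrongTo (f w) (f '' S) := by
  rcases h with h | h
  · exact .inl <| forall_mem_image.2 fun x hx => (sEdge_map_iff hf (hθ x hx)).2 (h x hx)
  · exact .inr <| forall_mem_image.2 fun x hx => (sAnti_map_iff hf (hθ x hx)).2 (h x hx)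

theorem IsCVertex.image (hf : Injective f) {A B : Set W} {c : W}
    (hθ : ∀ x ∈ A ∪ B, T.θ (f c) (f x) = T'.θ c x) (h : T'.IsCVertex A B c) :
    T.IsCVertex (f '' A) (f '' B) (f c) :=
  ⟨forall_mem_image.2 fun x hx => (sEdge_map_iff hf (hθ x (.inl hx))).2 (h.1 x hx),
    forall_mem_image.2 fun x hx => (sAnti_map_iff hf (hθ x (.inr hx))).2 (h.2 x hx)⟩

theorem homSet_image [Finite V] (hf : Injective f) {X : Set W} (hX : T'.HomSet X)
    (hθ : ∀ w, ∀ x ∈ X, T.θ (f w) (f x) = T'.θ w x)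
    (hout : ∀ v ∉ Set.range f, T.StrongTo v (f '' X)) :
    T.HomSet (f '' X) ∧ f '' X ⊂ Set.range f := by
  obtain ⟨h1, h2, hmod⟩ := hX
  have hss : f '' X ⊂ Set.range f := by
    refine (image_subset_range f X).ssubset_of_ne fun h => h2.ne ?_
    rw [← image_univ, hf.image_injective.eq_iff] at h
    rw [h, ncard_univ]
  obtain ⟨v, hvf, hvX⟩ := exists_of_ssubset hss
  refine ⟨homSet_of_strongTo (by rwa [ncard_image_of_injective _ hf]) ⟨v, hvX⟩ fun v hv => ?_, hss⟩
  by_cases hvf : v ∈ Set.range f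
  · obtain ⟨w, rfl⟩ := hvf
    exact StrongTo.image hf (hθ w) (hmod w fun hw => hv (mem_image_of_mem f hw))
  · exact hout v hvf

theorem properHomPair_image [Finite V] (hf : Injective f) {A B : Set W} (hP : T'.ProperHomPair A B)
    (hθ : ∀ w, ∀ x ∈ A ∪ B, T.θ (f w) (f x) = T'.θ w x)
    (hout : ∀ v ∉ Set.range f, T.StrongTo v (f '' A) ∧ T.StrongTo v (f '' B)) :
    T.ProperHomPair (f '' A) (f '' B) ∧ f '' A ∪ f '' B ⊂ Set.range f := by
  obtain ⟨hnc, hna, h3, h3c, hmod, ⟨c, hc⟩, ⟨d, hd⟩⟩ := properHomPair_iff.1 hP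
  have himg : f '' A ∪ f '' B = f '' (A ∪ B) := (image_union f A B).symm
  have hcompl : f '' (A ∪ B)ᶜ ⊆ (f '' (A ∪ B))ᶜ := image_compl_subset hf
  obtain ⟨w, hw⟩ := nonempty_of_ncard_ne_zero (s := (A ∪ B)ᶜ) (by omega)
  refine ⟨properHomPair_iff.2 ⟨fun h => hnc fun a ha b hb => ?_, fun h => hna fun a ha b hb => ?_,
    ?_, ?_, fun v hv => ?_, ⟨f c, hc.image hf (hθ c)⟩,
    ⟨f d, hd.image hf fun x hx => hθ d x (by rwa [union_comm])⟩⟩,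
    himg ▸ (image_subset_range f _).ssubset_of_ne
      fun h => hcompl (mem_image_of_mem f hw) (h ▸ mem_range_self w)⟩
  · exact (sEdge_map_iff hf (hθ a b (.inr hb))).1
      (h _ (mem_image_of_mem f ha) _ (mem_image_of_mem f hb))
  · exact (sAnti_map_iff hf (hθ a b (.inr hb))).1
      (h _ (mem_image_of_mem f ha) _ (mem_image_of_mem f hb))
  · rwa [himg, ncard_image_of_injective _ hf]
  · rw [himg]
    calc 3 ≤ (A ∪ B)ᶜ.ncard := h3c
      _ = (f '' (A ∪ B)ᶜ).ncard := (ncard_image_of_injective _ hf).symm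
      _ ≤ _ := ncard_le_ncard hcompl
  · rw [himg] at hv
    by_cases hvf : v ∈ Set.range f
    · obtain ⟨w, rfl⟩ := hvf
      have hw : w ∉ A ∪ B := fun hw => hv (mem_image_of_mem f hw)
      exact ⟨(hmod w hw).1.image hf fun x hx => hθ w x (.inl hx),
        (hmod w hw).2.image hf fun x hx => hθ w x (.inr hx)⟩
    · exact hout v hvf

end Image

theorem exists_homCut_ssubset_of_homCut_induce [Finite V] {X : Set V} (hX : T.HomSet X)
    {X' : Set X} (hX' : (T.induce X).HomCut X') : ∃ Y, T.HomCut Y ∧ Y ⊂ X := by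
  have hout : ∀ v ∉ Set.range ((↑) : X → V), ∀ S : Set X, T.StrongTo v ((↑) '' S) :=
    fun v hv S => StrongTo.mono (hX.2.2 v (by simpa using hv)) (Subtype.coe_image_subset X S)
  rcases hX' with hX' | ⟨A', B', rfl, hP⟩
  · obtain ⟨hY, hYX⟩ :=
      homSet_image Subtype.val_injective hX' (fun _ _ _ => rfl) fun v hv => hout v hv _
    exact ⟨_, .inl hY, by rwa [Subtype.range_coe] at hYX⟩
  · obtain ⟨hY, hYX⟩ := properHomPair_image Subtype.val_injective hP (fun _ _ _ => rfl)
      fun v hv => ⟨hout v hv _, hout v hv _⟩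
    exact ⟨_, .inr ⟨_, _, rfl, hY⟩, by rwa [Subtype.range_coe] at hYX⟩

theorem exists_inl_mem_of_three_le_ncard {α : Type*} {S : Set (α ⊕ Fin 2)} (h : 3 ≤ S.ncard) :
    ∃ u, .inl u ∈ S := by
  by_contra! hS
  have hsub : S ⊆ Set.range Sum.inr := by
    rintro (u | i) hx
    exacts [absurd hx (hS u), mem_range_self i]
  have := ncard_le_ncard hsub
  rw [ncard_range_of_injective Sum.inr_injective, Nat.card_fin] at this
  omega

section Block

variable {A B : Set V}

open Classical in
theorem blockXPair_θ_inr_zero (u : ↥(A ∪ B)) :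
    (T.blockXPair A B).θ (.inr 0) (.inl u) = if (u : V) ∈ A then 1 else -1 := by
  simp [blockXPair, augment2]

open Classical in
theorem blockXPair_θ_inr_one (u : ↥(A ∪ B)) :
    (T.blockXPair A B).θ (.inr 1) (.inl u) = if (u : V) ∈ B then 1 else -1 := by
  simp [blockXPair, augment2]

theorem blockXPair_switch : (T.blockXPair A B).Switch (.inr 0) (.inr 1) :=
  ⟨by simp, rfl⟩

theorem blockXPair_not_strongTo (hAB : Disjoint A B) {S : Set (↥(A ∪ B) ⊕ Fin 2)}
    (h0 : .inr 0 ∈ S) (h1 : .inr 1 ∈ S) {w : ↥(A ∪ B) ⊕ Fin 2} (hw : w ∉ S) :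
    ¬ (T.blockXPair A B).StrongTo w S := by
  intro h
  have hθ := h.θ_eq h0 h1
  rcases w with u | i
  · rw [(T.blockXPair A B).symm, (T.blockXPair A B).symm (.inl u), blockXPair_θ_inr_zero,
      blockXPair_θ_inr_one] at hθ
    rcases u.2 with hu | hu
    · simp [hu, disjoint_left.1 hAB hu] at hθ
    · simp [hu, disjoint_right.1 hAB hu] at hθ
  · obtain rfl | rfl : i = 0 ∨ i = 1 := by omega
    exacts [hw h0, hw h1]

/-- The markers `c, d` of the block are represented in `T` by a C-vertex `c₀` and a D-vertex
`d₀` of `(A, B)`. -/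
def blockRepr (A B : Set V) (c₀ d₀ : V) : ↥(A ∪ B) ⊕ Fin 2 → V :=
  Sum.elim (↑) ![c₀, d₀]

variable {c₀ d₀ : V}

theorem blockRepr_inr_eq_or (i : Fin 2) :
    blockRepr A B c₀ d₀ (.inr i) = c₀ ∨ blockRepr A B c₀ d₀ (.inr i) = d₀ := by
  obtain rfl | rfl : i = 0 ∨ i = 1 := by omega
  exacts [.inl rfl, .inr rfl]

theorem θ_blockRepr (hc₀ : T.IsCVertex A B c₀) (hd₀ : T.IsCVertex B A d₀)
    (w : ↥(A ∪ B) ⊕ Fin 2) (u : ↥(A ∪ B)) :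
    T.θ (blockRepr A B c₀ d₀ w) u = (T.blockXPair A B).θ w (.inl u) := by
  rcases w with w | i
  · rfl
  have hAB := hc₀.disjoint
  obtain rfl | rfl : i = 0 ∨ i = 1 := by omega
  · rw [blockXPair_θ_inr_zero]
    rcases u.2 with hu | hu
    · simpa [blockRepr, hu] using (hc₀.1 u hu).2
    · simpa [blockRepr, hu, disjoint_right.1 hAB hu] using (hc₀.2 u hu).2
  · rw [blockXPair_θ_inr_one]
    rcases u.2 with hu | hu
    · simpa [blockRepr, hu, disjoint_left.1 hAB hu] using (hd₀.2 u hu).2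
    · simpa [blockRepr, hu] using (hd₀.1 u hu).2

theorem blockRepr_injective (hc₀ : T.IsCVertex A B c₀) (hd₀ : T.IsCVertex B A d₀)
    (hA : A.Nonempty) : Injective (blockRepr A B c₀ d₀) := by
  have hout : ∀ i, blockRepr A B c₀ d₀ (.inr i) ∉ A ∪ B := fun i => by
    rcases blockRepr_inr_eq_or (A := A) (B := B) (c₀ := c₀) (d₀ := d₀) i with h | h <;> rw [h]
    exacts [hc₀.not_mem, union_comm A B ▸ hd₀.not_mem]
  obtain ⟨a, ha⟩ := hA
  rintro (u | i) (v | j) h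
  · exact congrArg _ (Subtype.ext h)
  · exact absurd (h ▸ u.2) (hout j)
  · exact absurd (h ▸ v.2) (hout i)
  · obtain rfl | rfl : i = 0 ∨ i = 1 := by omega
    all_goals obtain rfl | rfl : j = 0 ∨ j = 1 := by omega
    · rfl
    · exact (((show c₀ = d₀ from h) ▸ hc₀.1 a ha).not_sAnti (hd₀.2 a ha)).elim
    · exact (((show c₀ = d₀ from h.symm) ▸ hc₀.1 a ha).not_sAnti (hd₀.2 a ha)).elim
    · rfl

theorem subset_range_blockRepr : A ∪ B ⊆ Set.range (blockRepr A B c₀ d₀) :=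
  fun u hu => ⟨.inl ⟨u, hu⟩, rfl⟩

theorem blockRepr_image_subset {S : Set (↥(A ∪ B) ⊕ Fin 2)} (hS : ∀ k, .inr k ∉ S) :
    blockRepr A B c₀ d₀ '' S ⊆ A ∪ B := by
  rintro _ ⟨u | k, hx, rfl⟩
  exacts [u.2, absurd hx (hS k)]

theorem blockRepr_inr_strongTo (hc₀ : T.IsCVertex A B c₀) (hd₀ : T.IsCVertex B A d₀) (k : Fin 2)
    {S : Set V} (hS : S ⊆ A ∨ S ⊆ B) : T.StrongTo (blockRepr A B c₀ d₀ (.inr k)) S := by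
  rcases blockRepr_inr_eq_or (A := A) (B := B) (c₀ := c₀) (d₀ := d₀) k with h | h <;> rw [h]
  exacts [hc₀.strongTo hS, hd₀.strongTo hS.symm]

theorem θ_blockRepr_of_forall_inr_not_mem (hc₀ : T.IsCVertex A B c₀) (hd₀ : T.IsCVertex B A d₀)
    {S : Set (↥(A ∪ B) ⊕ Fin 2)} (hS : ∀ k, .inr k ∉ S) (w : ↥(A ∪ B) ⊕ Fin 2) :
    ∀ x ∈ S, T.θ (blockRepr A B c₀ d₀ w) (blockRepr A B c₀ d₀ x) = (T.blockXPair A B).θ w x := by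
  rintro (u | k) hx
  exacts [θ_blockRepr hc₀ hd₀ w u, absurd hx (hS k)]

theorem blockRepr_image_subset_or (hc₀ : T.IsCVertex A B c₀) (hd₀ : T.IsCVertex B A d₀)
    (hA : A.Nonempty) {S : Set (↥(A ∪ B) ⊕ Fin 2)} (hS : ∀ k, .inr k ∉ S)
    (hc : (T.blockXPair A B).StrongTo (.inr 0) S) :
    blockRepr A B c₀ d₀ '' S ⊆ A ∨ blockRepr A B c₀ d₀ '' S ⊆ B :=
  hc₀.subset_or_subset (blockRepr_image_subset hS)
    (hc.image (blockRepr_injective hc₀ hd₀ hA) (θ_blockRepr_of_forall_inr_not_mem hc₀ hd₀ hS _))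

theorem exists_homCut_ssubset_of_homSet_blockXPair [Finite V] (hmod : T.PairModule A B)
    (hc₀ : T.IsCVertex A B c₀) (hd₀ : T.IsCVertex B A d₀) (hA : A.Nonempty) (hB : B.Nonempty)
    {X' : Set (↥(A ∪ B) ⊕ Fin 2)} (hX' : (T.blockXPair A B).HomSet X') :
    ∃ Y, T.HomCut Y ∧ Y ⊂ A ∪ B := by
  have hAB := hc₀.disjoint
  have hsw : (T.blockXPair A B).Switch (.inr 0) (.inr 1) := blockXPair_switch
  have h0 : .inr 0 ∉ X' := fun h0 => by
    have h1 : .inr 1 ∈ X' := hsw.symm.mem_of_strongTo hX'.2.2 h0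
    refine hX'.2.1.ne ?_
    rw [eq_univ_of_forall fun w => by_contra fun hw =>
      blockXPair_not_strongTo hAB h0 h1 hw (hX'.2.2 w hw), ncard_univ]
  have hinr : ∀ k, .inr k ∉ X' :=
    Fin.forall_fin_two.2 ⟨h0, fun h1 => h0 (hsw.mem_of_strongTo hX'.2.2 h1)⟩
  have hside := blockRepr_image_subset_or hc₀ hd₀ hA hinr (hX'.2.2 _ h0)
  obtain ⟨hY, -⟩ := homSet_image (blockRepr_injective hc₀ hd₀ hA) hX'
    (θ_blockRepr_of_forall_inr_not_mem hc₀ hd₀ hinr)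
    fun v hv => hmod.strongTo (fun h => hv (subset_range_blockRepr h)) hside
  refine ⟨_, .inl hY, (ssubset_iff_of_subset (blockRepr_image_subset hinr)).2 ?_⟩
  obtain ⟨a, ha⟩ := hA
  obtain ⟨b, hb⟩ := hB
  rcases hside with h | h
  · exact ⟨b, .inr hb, fun hb' => disjoint_left.1 hAB (h hb') hb⟩
  · exact ⟨a, .inl ha, fun ha' => disjoint_left.1 hAB ha (h ha')⟩

theorem exists_homCut_ssubset_of_properHomPair_blockXPair_of_inr_not_mem [Finite V]
    (hmod : T.PairModule A B) (hc₀ : T.IsCVertex A B c₀) (hd₀ : T.IsCVertex B A d₀)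
    (hA : A.Nonempty) {A' B' : Set (↥(A ∪ B) ⊕ Fin 2)}
    (hP' : (T.blockXPair A B).ProperHomPair A' B') (hinr : ∀ k, .inr k ∉ A' ∪ B') :
    ∃ Y, T.HomCut Y ∧ Y ⊂ A ∪ B := by
  obtain ⟨-, -, -, h3c', hmod', -, -⟩ := properHomPair_iff.1 hP'
  have hinj := blockRepr_injective hc₀ hd₀ hA
  have hside : ∀ {S}, S ⊆ A' ∪ B' → (∀ w ∉ A' ∪ B', (T.blockXPair A B).StrongTo w S) →
      blockRepr A B c₀ d₀ '' S ⊆ A ∨ blockRepr A B c₀ d₀ '' S ⊆ B := fun hS hmodS =>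
    blockRepr_image_subset_or hc₀ hd₀ hA (fun k hk => hinr k (hS hk)) (hmodS _ (hinr 0))
  obtain ⟨hY, -⟩ := properHomPair_image hinj hP' (θ_blockRepr_of_forall_inr_not_mem hc₀ hd₀ hinr)
    fun v hv => have hv' : v ∉ A ∪ B := fun h => hv (subset_range_blockRepr h)
      ⟨hmod.strongTo hv' (hside subset_union_left fun w hw => (hmod' w hw).1),
        hmod.strongTo hv' (hside subset_union_right fun w hw => (hmod' w hw).2)⟩
  obtain ⟨u, hu⟩ := exists_inl_mem_of_three_le_ncard h3c'
  refine ⟨_, .inr ⟨_, _, rfl, hY⟩, (ssubset_iff_of_subset ?_).2 ⟨u, u.2, ?_⟩⟩ <;>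
    rw [← image_union]
  · exact blockRepr_image_subset hinr
  · exact fun h => hu (hinj.mem_set_image.1 h)

theorem exists_θ_eq_θ_blockRepr_inr_eq_or (hc₀ : T.IsCVertex A B c₀) (hd₀ : T.IsCVertex B A d₀)
    {A' B' : Set (↥(A ∪ B) ⊕ Fin 2)} (hmod' : (T.blockXPair A B).PairModule A' B')
    (hinr : ∀ k, .inr k ∉ (A' ∪ B')ᶜ) {i j : Fin 2} (hi : .inr i ∈ A') (hj : .inr j ∈ B')
    {u : ↥(A ∪ B)} (hu : .inl u ∈ A' ∪ B') :
    ∃ k, ∀ z ∈ blockRepr A B c₀ d₀ '' (A' ∪ B')ᶜ,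
      T.θ u z = T.θ (blockRepr A B c₀ d₀ (.inr k)) z := by
  obtain ⟨k, hk⟩ : ∃ k, ∀ w ∉ A' ∪ B',
      (T.blockXPair A B).θ w (.inl u) = (T.blockXPair A B).θ w (.inr k) := by
    rcases hu with hu | hu
    exacts [⟨i, fun w hw => (hmod' w hw).1.θ_eq hu hi⟩, ⟨j, fun w hw => (hmod' w hw).2.θ_eq hu hj⟩]
  refine ⟨k, forall_mem_image.2 fun w hw => ?_⟩
  rcases w with z | l
  · rw [T.symm, θ_blockRepr hc₀ hd₀ (.inl z) u, hk _ hw, (T.blockXPair A B).symm]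
    exact (θ_blockRepr hc₀ hd₀ (.inr k) z).symm
  · exact absurd hw (hinr l)

theorem exists_homCut_ssubset_of_properHomPair_blockXPair_of_inr_mem [Finite V]
    (hmod : T.PairModule A B) (h3c : 3 ≤ (A ∪ B)ᶜ.ncard) (hc₀ : T.IsCVertex A B c₀)
    (hd₀ : T.IsCVertex B A d₀) (hA : A.Nonempty) {A' B' : Set (↥(A ∪ B) ⊕ Fin 2)}
    (hP' : (T.blockXPair A B).ProperHomPair A' B') {i j : Fin 2} (hi : .inr i ∈ A')
    (hj : .inr j ∈ B') : ∃ Y, T.HomCut Y ∧ Y ⊂ A ∪ B := by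
  obtain ⟨-, -, h3', h3c', hmod', ⟨c', hc'⟩, -⟩ := properHomPair_iff.1 hP'
  have hinj := blockRepr_injective hc₀ hd₀ hA
  have hinr : ∀ k, .inr k ∉ (A' ∪ B')ᶜ := fun k hk => by
    have hij : i ≠ j := fun h => disjoint_left.1 hc'.disjoint hi (h ▸ hj)
    obtain rfl | rfl : k = i ∨ k = j := by omega
    exacts [hk (.inl hi), hk (.inr hj)]
  set Z := blockRepr A B c₀ d₀ '' (A' ∪ B')ᶜ
  have hZ : Z ⊆ A ∪ B := blockRepr_image_subset hinr
  have hZAB : Z ∩ A ∪ Z ∩ B = Z := by rw [← inter_union_distrib_left, inter_eq_left.2 hZ]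
  have hmodZ : T.PairModule (Z ∩ A) (Z ∩ B) := by
    intro v hv
    rw [hZAB] at hv
    have hS : ∀ S ⊆ Z, S ⊆ A ∨ S ⊆ B → T.StrongTo v S := fun S hSZ hS => by
      by_cases hvAB : v ∈ A ∪ B
      · obtain ⟨k, hk⟩ := exists_θ_eq_θ_blockRepr_inr_eq_or hc₀ hd₀ hmod' hinr hi hj
          (u := ⟨v, hvAB⟩) (by_contra fun h => hv ⟨_, h, rfl⟩)
        exact (blockRepr_inr_strongTo hc₀ hd₀ k hS).congr (fun h => hv (hSZ h))
          fun s hs => hk s (hSZ hs)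
      · exact hmod.strongTo hvAB hS
    exact ⟨hS _ inter_subset_left (.inl inter_subset_right),
      hS _ inter_subset_left (.inr inter_subset_right)⟩
  obtain ⟨Y, hYZ, hY⟩ := exists_homCut_subset_of_pairModule hmodZ
    (by rwa [hZAB, ncard_image_of_injective _ hinj])
    (h3c.trans (ncard_le_ncard (compl_subset_compl.2
      (union_subset_union inter_subset_right inter_subset_right))))
    (hc₀.mono inter_subset_right inter_subset_right)
    (hd₀.mono inter_subset_right inter_subset_right)
  obtain ⟨u, hu⟩ := exists_inl_mem_of_three_le_ncard h3'
  exact ⟨Y, hY, (hZAB ▸ hYZ).trans_ssubset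
    ((ssubset_iff_of_subset hZ).2 ⟨u, u.2, fun h =>
      hinj.mem_set_image.1 (show blockRepr A B c₀ d₀ (.inl u) ∈ Z from h) hu⟩)⟩

theorem exists_homCut_ssubset_of_homCut_blockXPair [Finite V] (hP : T.ProperHomPair A B)
    {X' : Set (↥(A ∪ B) ⊕ Fin 2)} (hX' : (T.blockXPair A B).HomCut X') :
    ∃ Y, T.HomCut Y ∧ Y ⊂ A ∪ B := by
  obtain ⟨hnc, -, -, h3c, hmod, ⟨c₀, hc₀⟩, ⟨d₀, hd₀⟩⟩ := properHomPair_iff.1 hP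
  obtain ⟨hA, hB⟩ := nonempty_of_not_sComplete hnc
  rcases hX' with hX' | ⟨A', B', rfl, hP'⟩
  · exact exists_homCut_ssubset_of_homSet_blockXPair hmod hc₀ hd₀ hA hB hX'
  obtain ⟨-, -, -, h3c', hmod', -, -⟩ := properHomPair_iff.1 hP'
  have hsw : (T.blockXPair A B).Switch (.inr 0) (.inr 1) := blockXPair_switch
  by_cases h0 : .inr 0 ∈ A' ∪ B'
  · obtain ⟨w, hw⟩ := nonempty_of_ncard_ne_zero (s := (A' ∪ B')ᶜ) (by omega)
    have h1 := hsw.symm.mem_union_of_pairModule hmod' h0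
    rcases h0 with h0 | h0 <;> rcases h1 with h1 | h1
    · exact absurd (hmod' w hw).1 (blockXPair_not_strongTo hc₀.disjoint h0 h1 fun h => hw (.inl h))
    · exact exists_homCut_ssubset_of_properHomPair_blockXPair_of_inr_mem
        hmod h3c hc₀ hd₀ hA hP' h0 h1
    · exact exists_homCut_ssubset_of_properHomPair_blockXPair_of_inr_mem
        hmod h3c hc₀ hd₀ hA hP' h1 h0
    · exact absurd (hmod' w hw).2 (blockXPair_not_strongTo hc₀.disjoint h0 h1 fun h => hw (.inr h))
  · exact exists_homCut_ssubset_of_properHomPair_blockXPair_of_inr_not_mem hmod hc₀ hd₀ hA hP'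
      (Fin.forall_fin_two.2 ⟨h0, fun h1 => h0 (hsw.mem_union_of_pairModule hmod' h1)⟩)

end Block

end Trigraph

theorem blockX_no_homCut_of_minSided_general {V : Type} [Fintype V]
    (T : Trigraph V) (X : Set V) (hmin : T.MinSidedHomCut X) :
    (T.HomSet X → ∀ X' : Set ↥X, ¬ (T.induce X).HomCut X') ∧
    (∀ A B : Set V, X = A ∪ B → T.ProperHomPair A B →
      ∀ X' : Set (↥(A ∪ B) ⊕ Fin 2), ¬ (T.blockXPair A B).HomCut X') := by
  constructor
  · intro hX X' hX'
    obtain ⟨Y, hY, hYX⟩ := Trigraph.exists_homCut_ssubset_of_homCut_induce hX hX'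
    exact hmin.2 Y hY hYX
  · rintro A B rfl hP X' hX'
    obtain ⟨Y, hY, hYX⟩ := Trigraph.exists_homCut_ssubset_of_homCut_blockXPair hP hX'
    exact hmin.2 Y hY hYX

/-- If `(X, Y)` is a minimally-sided homogeneous cut of a trigraph `T`, then the block of
decomposition `T_X` has no homogeneous cut (in either of the two cases defining the
block `T_X`). -/
theorem blockX_no_homCut_of_minSided {V : Type} [Fintype V] [DecidableEq V]
    (T : Trigraph V) (X : Set V) (hmin : T.MinSidedHomCut X) :
    (T.HomSet X → ∀ X' : Set ↥X, ¬ (T.induce X).HomCut X') ∧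
    (∀ A B : Set V, X = A ∪ B → T.ProperHomPair A B →
      ∀ X' : Set (↥(A ∪ B) ⊕ Fin 2), ¬ (T.blockXPair A B).HomCut X') :=
  blockX_no_homCut_of_minSided_general T X hmin
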